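/- For the CBC mode of operation, the image of any open ball eventually covers the whole space: for every point P ∈ X and every ε > 0, there exists an integer n ∈ ℕ such that G_g^{∘n}(B(P, ε)) = X, where B(P, ε) = {Q ∈ X : d(P, Q) < ε} is the open ball of center P and radius ε. -/

import Mathlib

/-!
Once `10⁻ⁿ < ε`, the ball `B(P, ε)` contains every point `(P.1, m)` whose message `m` agrees with
that of `P` on its first `n` blocks. Along such a point the first `n` steps of `G_g` are forced, the
block `m^n` can be chosen so that `E_k(x ⊕ m^n)` is any prescribed block (as `E_k` is onto), and the
blocks after it become, after `n + 1` shifts, an arbitrary message. Hence `G_g^{n+1}` maps the ball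
onto `X`.
-/

open scoped BigOperators

/-- N-bit blocks: Boolean vectors of length N. -/
abbrev Block (N : ℕ) := Fin N → Bool

/-- Infinite sequences of N-bit blocks. -/
abbrev Msg (N : ℕ) := ℕ → Block N

/-- The phase space X = B^N × S_N. -/
abbrev Phase (N : ℕ) := Block N × Msg N

/-- Hamming distance d_e on B^N. -/
noncomputable def dE {N : ℕ} (x y : Block N) : ℝ :=
  ∑ j : Fin N, if x j = y j then (0 : ℝ) else 1

/-- Distance d_m on message sequences. -/
noncomputable def dM {N : ℕ} (m m' : Msg N) : ℝ :=
  (9 / (N : ℝ)) * ∑' k : ℕ, (∑ i : Fin N, if m k i = m' k i then (0 : ℝ) else 1) / 10 ^ (k + 1)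

/-- The distance d on the phase space X. -/
noncomputable def dX {N : ℕ} (P Q : Phase N) : ℝ :=
  dE P.1 Q.1 + dM P.2 Q.2

/-- The shift on message sequences. -/
def shiftMsg {N : ℕ} (m : Msg N) : Msg N := fun k => m (k + 1)

/-- The dynamical system G_g(x, m) = (g(m^0, x), σ(m)). -/
def Gg {N : ℕ} (g : Block N → Block N → Block N) (P : Phase N) : Phase N :=
  (g (P.2 0) P.1, shiftMsg P.2)

/-- The CBC iterate function g(m, x) = E_k(x ⊕ m), with ⊕ the bitwise XOR. -/
def cbcG {N : ℕ} (Ek : Block N → Block N) (m x : Block N) : Block N :=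
  Ek (fun j => Bool.xor (x j) (m j))

open Set

variable {N : ℕ}

lemma dE_self (x : Block N) : dE x x = 0 := by
  simp [dE]

lemma dE_nonneg (x y : Block N) : 0 ≤ dE x y :=
  Finset.sum_nonneg fun _ _ => by positivity

lemma dE_le_card (x y : Block N) : dE x y ≤ N := by
  calc dE x y ≤ ∑ _j : Fin N, (1 : ℝ) := Finset.sum_le_sum fun j _ => by split <;> norm_num
    _ = N := by simp

lemma tsum_one_div_ten_pow_add (n : ℕ) :
    ∑' k : ℕ, (1 / 10 : ℝ) ^ (k + n + 1) = (1 / 10) ^ n / 9 := by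
  simp_rw [pow_add, tsum_mul_right, tsum_geometric_of_lt_one (by norm_num : (0 : ℝ) ≤ 1 / 10)
    (by norm_num)]
  ring

lemma dM_le_of_forall_lt_eq {m m' : Msg N} {n : ℕ} (h : ∀ k < n, m k = m' k) :
    dM m m' ≤ (1 / 10 : ℝ) ^ n := by
  rcases Nat.eq_zero_or_pos N with rfl | hN
  · simp [dM] -- the factor `9 / N` is `9 / 0 = 0`
  set f : ℕ → ℝ := fun k => dE (m k) (m' k) / 10 ^ (k + 1)
  have hf_nonneg (k : ℕ) : 0 ≤ f k := div_nonneg (dE_nonneg _ _) (by positivity)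
  have hgeom : Summable fun k => (1 / 10 : ℝ) ^ k :=
    summable_geometric_of_lt_one (by norm_num) (by norm_num)
  have hf_le (k : ℕ) : f k ≤ N * (1 / 10) ^ (k + 1) := by
    rw [one_div_pow, ← div_eq_mul_one_div]
    exact div_le_div_of_nonneg_right (dE_le_card _ _) (by positivity)
  have hf : Summable f :=
    .of_nonneg_of_le hf_nonneg hf_le ((hgeom.comp_injective (add_left_injective 1)).mul_left _)
  have hf_head : ∑ k ∈ Finset.range n, f k = 0 :=
    Finset.sum_eq_zero fun k hk => by simp [f, h k (Finset.mem_range.mp hk), dE_self]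
  have hf_tail : ∑' k, f (k + n) ≤ N * ((1 / 10) ^ n / 9) := by
    rw [← tsum_one_div_ten_pow_add, ← tsum_mul_left]
    exact (hf.comp_injective (add_left_injective n)).tsum_le_tsum (fun k => hf_le (k + n))
      ((hgeom.comp_injective (add_left_injective (n + 1))).mul_left _)
  calc dM m m' = 9 / N * ∑' k, f k := rfl
    _ = 9 / N * ∑' k, f (k + n) := by rw [← hf.sum_add_tsum_nat_add n, hf_head, zero_add]
    _ ≤ 9 / N * (N * ((1 / 10) ^ n / 9)) := by gcongr
    _ = (1 / 10) ^ n := by field_simp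

def cylinder (x : Block N) (m : Msg N) (n : ℕ) : Set (Phase N) :=
  {Q | Q.1 = x ∧ ∀ k < n, Q.2 k = m k}

lemma cylinder_subset_ball (P : Phase N) {n : ℕ} {ε : ℝ} (hn : (1 / 10 : ℝ) ^ n < ε) :
    cylinder P.1 P.2 n ⊆ {Q | dX P Q < ε} := by
  rintro ⟨x, m⟩ ⟨rfl, hm⟩
  calc dX P (P.1, m) = dM P.2 m := by simp [dX, dE_self]
    _ ≤ (1 / 10) ^ n := dM_le_of_forall_lt_eq fun k hk => (hm k hk).symm
    _ < ε := hn

def consMsg (b : Block N) (m : Msg N) : Msg N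
  | 0 => b
  | k + 1 => m k

@[simp]
lemma shiftMsg_consMsg (b : Block N) (m : Msg N) : shiftMsg (consMsg b m) = m := rfl

lemma image_Gg_cylinder_zero {g : Block N → Block N → Block N}
    (hg : ∀ x, Function.Surjective fun b => g b x) (x : Block N) (m : Msg N) :
    Gg g '' cylinder x m 0 = univ := by
  refine eq_univ_of_forall fun ⟨y, m'⟩ => ?_
  obtain ⟨b, hb⟩ := hg x y
  exact ⟨(x, consMsg b m'), ⟨rfl, by simp⟩, by simpa [Gg, consMsg] using hb⟩

lemma cylinder_subset_image_Gg (g : Block N → Block N → Block N) (x : Block N) (m : Msg N)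
    (n : ℕ) : cylinder (g (m 0) x) (shiftMsg m) n ⊆ Gg g '' cylinder x m (n + 1) := by
  rintro ⟨_, m'⟩ ⟨rfl, hm'⟩
  refine ⟨(x, consMsg (m 0) m'), ⟨rfl, ?_⟩, rfl⟩
  rintro (_ | k) hk
  · rfl
  · exact hm' k (by omega)

lemma iterate_Gg_image_cylinder {g : Block N → Block N → Block N}
    (hg : ∀ x, Function.Surjective fun b => g b x) (x : Block N) (m : Msg N) (n : ℕ) :
    (Gg g)^[n + 1] '' cylinder x m n = univ := by
  induction n generalizing x m with
  | zero => simpa using image_Gg_cylinder_zero hg x m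
  | succ n ih =>
    refine eq_univ_of_univ_subset ?_
    rw [Function.iterate_succ, image_comp, ← ih (g (m 0) x) (shiftMsg m)]
    exact image_mono (cylinder_subset_image_Gg g x m n)

lemma cbcG_surjective_left {Ek : Block N → Block N} (hEk : Function.Surjective Ek) (x : Block N) :
    Function.Surjective fun b => cbcG Ek b x := by
  intro y
  obtain ⟨z, rfl⟩ := hEk y
  exact ⟨fun j => xor (x j) (z j), congrArg Ek (funext fun j => by simp)⟩

theorem cbc_ball_image_covers_general
    {N : ℕ} (Ek : Block N → Block N) (hEk : Function.Bijective Ek) :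
    ∀ (P : Phase N) (ε : ℝ), 0 < ε →
      ∃ n : ℕ, (Gg (cbcG Ek))^[n] '' {Q : Phase N | dX P Q < ε} = Set.univ := by
  intro P ε hε
  obtain ⟨n, hn⟩ : ∃ n : ℕ, (1 / 10 : ℝ) ^ n < ε := exists_pow_lt_of_lt_one hε (by norm_num)
  refine ⟨n + 1, eq_univ_of_univ_subset ?_⟩
  rw [← iterate_Gg_image_cylinder (cbcG_surjective_left hEk.2) P.1 P.2 n]
  exact image_mono (cylinder_subset_ball P hn)

/-- for the CBC mode, the image of any open ball eventually covers X. -/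
theorem cbc_ball_image_covers
    {N : ℕ} (hN : 1 ≤ N) (Ek : Block N → Block N) (hEk : Function.Bijective Ek) :
    ∀ (P : Phase N) (ε : ℝ), 0 < ε →
      ∃ n : ℕ, (Gg (cbcG Ek))^[n] '' {Q : Phase N | dX P Q < ε} = Set.univ :=
  cbc_ball_image_covers_general Ek hEk
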